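/- arXiv:1011.5496 — 4 statements merged into one kernel-verified Lean document; each statement's English description precedes it below -/
import Mathlib

section
/- Suppose p x y > 0 for all x ∈ 𝒳₁ and y ∈ 𝒳₂ (full support). Then non-adjacency in the characteristic graph G_{X₁} is transitive: for all a, b, c ∈ 𝒳₁, if a and b are not adjacent in G_{X₁} and b and c are not adjacent in G_{X₁}, then a and c are not adjacent in G_{X₁}. Equivalently, the relation 'a = b or a and b are non-adjacent in G_{X₁}' is an equivalence relation on 𝒳₁, i.e., the complement of G_{X₁} is a disjoint union of cliques. -/
/-- The characteristic graph `G_{X₁}` of `X₁` with respect to `X₂`, the joint weights `p`,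
and the function `f`: distinct vertices `a, b : X1` are adjacent iff there exists `y : X2`
with `p a y > 0`, `p b y > 0`, and `f a y ≠ f b y`. -/
def charGraph {X1 X2 Z : Type*} (f : X1 → X2 → Z) (p : X1 → X2 → ℝ) : SimpleGraph X1 where
  Adj a b := a ≠ b ∧ ∃ y, 0 < p a y ∧ 0 < p b y ∧ f a y ≠ f b y
  symm := by
    refine ⟨?_⟩
    rintro a b ⟨hab, y, h1, h2, h3⟩
    exact ⟨hab.symm, y, h2, h1, h3.symm⟩
  loopless := by
    refine ⟨?_⟩
    rintro a ⟨h, -⟩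
    exact h rfl

theorem charGraph_adj_iff_of_pos {X1 X2 Z : Type*} {f : X1 → X2 → Z} {p : X1 → X2 → ℝ}
    {a b : X1} (ha : ∀ y, 0 < p a y) (hb : ∀ y, 0 < p b y) :
    (charGraph f p).Adj a b ↔ f a ≠ f b := by
  constructor
  · rintro ⟨-, y, -, -, hy⟩ hab
    exact hy (congrFun hab y)
  · intro hab
    obtain ⟨y, hy⟩ := Function.ne_iff.mp hab
    exact ⟨fun h ↦ hab (congrArg f h), y, ha y, hb y, hy⟩

theorem stmt0_general {X1 X2 Z : Type*}
    (f : X1 → X2 → Z) (p : X1 → X2 → ℝ) (hp : ∀ x y, 0 < p x y) :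
    ∀ a b c : X1, ¬ (charGraph f p).Adj a b → ¬ (charGraph f p).Adj b c →
      ¬ (charGraph f p).Adj a c := by
  intro a b c
  simp only [charGraph_adj_iff_of_pos (hp _) (hp _), not_not]
  exact Eq.trans

/-- Under the full-support hypothesis, non-adjacency in the characteristic graph is
transitive (equivalently, the complement of `G_{X₁}` is a disjoint union of cliques). -/
theorem stmt0 {X1 X2 Z : Type*} [Fintype X1] [Nonempty X1] [Fintype X2] [Nonempty X2]
    (f : X1 → X2 → Z) (p : X1 → X2 → ℝ) (hp : ∀ x y, 0 < p x y) :
    ∀ a b c : X1, ¬ (charGraph f p).Adj a b → ¬ (charGraph f p).Adj b c →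
      ¬ (charGraph f p).Adj a c :=
  stmt0_general f p hp
end

section
/- Suppose each c_i : 𝒳 i → C_i is a proper coloring of the characteristic graph G_i. If x and x' are admissible points joined by a path within a joint coloring class (a finite sequence of admissible points starting at x and ending at x', all having the same color tuple (c_i applied coordinatewise), in which any two consecutive points differ in exactly one coordinate), then f x = f x'. -/
/-- The characteristic graph `G_i` of the `i`-th source with respect to the other sources,
the joint weights `p`, and the function `f`: distinct `a, b : 𝒳 i` are adjacent iff there is
an admissible point `x` with `x i = a` such that `Function.update x i b` is also admissible
and `f` takes different values at the two points. -/
def charGraphI {k : ℕ} {𝒳 : Fin k → Type*} {Z : Type*}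
    (f : (∀ i, 𝒳 i) → Z) (p : (∀ i, 𝒳 i) → ℝ) (i : Fin k) : SimpleGraph (𝒳 i) where
  Adj a b := a ≠ b ∧ ∃ x : ∀ j, 𝒳 j, x i = a ∧ 0 < p x ∧ 0 < p (Function.update x i b) ∧
      f x ≠ f (Function.update x i b)
  symm := by
    constructor
    rintro a b ⟨hab, x, hxi, hpx, hpx', hf⟩
    have h1 : Function.update (Function.update x i b) i a = x := by
      rw [Function.update_idem, ← hxi, Function.update_eq_self]
    refine ⟨hab.symm, Function.update x i b, by simp, hpx', ?_, ?_⟩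
    · rw [h1]; exact hpx
    · rw [h1]; exact hf.symm
  loopless := by
    constructor
    rintro a ⟨h, -⟩
    exact h rfl

/-- Two points differ in exactly one coordinate. -/
def DifferAtOne {k : ℕ} {𝒳 : Fin k → Type*} (x x' : ∀ i, 𝒳 i) : Prop :=
  ∃ i, x i ≠ x' i ∧ ∀ j, j ≠ i → x j = x' j

/-- A path within a joint coloring class from `x` to `x'`: a finite sequence of admissible
points starting at `x` and ending at `x'`, all having the same color tuple as `x`, in which
any two consecutive points differ in exactly one coordinate. -/
def JointClassPath {k : ℕ} {𝒳 : Fin k → Type*} {C : Fin k → Type*}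
    (p : (∀ i, 𝒳 i) → ℝ) (c : ∀ i, 𝒳 i → C i) (x x' : ∀ i, 𝒳 i) : Prop :=
  ∃ (m : ℕ) (w : Fin (m + 1) → ∀ i, 𝒳 i),
    w 0 = x ∧ w (Fin.last m) = x' ∧ (∀ t, 0 < p (w t)) ∧
    (∀ t i, c i (w t i) = c i (x i)) ∧
    ∀ t : Fin m, DifferAtOne (w t.castSucc) (w t.succ)

theorem Fin.apply_zero_eq_apply_last_of_forall_castSucc_eq_succ {α : Type*} {m : ℕ}
    (g : Fin (m + 1) → α) (h : ∀ t : Fin m, g t.castSucc = g t.succ) :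
    g 0 = g (Fin.last m) := by
  suffices ∀ t : Fin (m + 1), g 0 = g t from this _
  intro t
  induction t using Fin.induction with
  | zero => rfl
  | succ t ih => rw [ih, h t]

section CharGraph

variable {k : ℕ} {𝒳 : Fin k → Type*} {Z : Type*} {C : Fin k → Type*}

theorem charGraphI_adj_of_differAtOne {f : (∀ i, 𝒳 i) → Z} {p : (∀ i, 𝒳 i) → ℝ}
    {x y : ∀ i, 𝒳 i} {i : Fin k} (hne : x i ≠ y i) (heq : ∀ j, j ≠ i → x j = y j)
    (hx : 0 < p x) (hy : 0 < p y) (hf : f x ≠ f y) :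
    (charGraphI f p i).Adj (x i) (y i) := by
  rw [← Function.update_eq_iff.2 ⟨rfl, heq⟩] at hy hf
  exact ⟨hne, x, rfl, hx, hy, hf⟩

theorem DifferAtOne.apply_eq_of_colorings {f : (∀ i, 𝒳 i) → Z} {p : (∀ i, 𝒳 i) → ℝ}
    {c : ∀ i, 𝒳 i → C i} (hc : ∀ i, ∀ a b, (charGraphI f p i).Adj a b → c i a ≠ c i b)
    {x y : ∀ i, 𝒳 i} (hxy : DifferAtOne x y) (hx : 0 < p x) (hy : 0 < p y)
    (hcol : ∀ i, c i (x i) = c i (y i)) : f x = f y := by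
  obtain ⟨i, hne, heq⟩ := hxy
  by_contra hf
  exact hc i _ _ (charGraphI_adj_of_differAtOne hne heq hx hy hf) (hcol i)

end CharGraph

theorem stmt9_general {k : ℕ} {𝒳 : Fin k → Type*} {Z : Type*} {C : Fin k → Type*}
    (f : (∀ i, 𝒳 i) → Z) (p : (∀ i, 𝒳 i) → ℝ)
    (c : ∀ i, 𝒳 i → C i)
    (hc : ∀ i, ∀ a b, (charGraphI f p i).Adj a b → c i a ≠ c i b)
    (x x' : ∀ i, 𝒳 i)
    (hpath : JointClassPath p c x x') :
    f x = f x' := by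
  obtain ⟨m, w, rfl, rfl, hadm, hcol, hstep⟩ := hpath
  refine Fin.apply_zero_eq_apply_last_of_forall_castSucc_eq_succ (f ∘ w) fun t => ?_
  exact (hstep t).apply_eq_of_colorings hc (hadm _) (hadm _) fun i => by
    rw [hcol t.castSucc i, hcol t.succ i]

/-- If each `c i` is a proper coloring of the characteristic graph `G_i`, then any two
admissible points joined by a path within a joint coloring class have the same `f`-value. -/
theorem stmt9 {k : ℕ} (hk : 0 < k) {𝒳 : Fin k → Type*} [∀ i, Fintype (𝒳 i)]
    [∀ i, Nonempty (𝒳 i)] {Z : Type*} {C : Fin k → Type*}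
    (f : (∀ i, 𝒳 i) → Z) (p : (∀ i, 𝒳 i) → ℝ) (hp : ∀ x, 0 ≤ p x)
    (c : ∀ i, 𝒳 i → C i)
    (hc : ∀ i, ∀ a b, (charGraphI f p i).Adj a b → c i a ≠ c i b)
    (x x' : ∀ i, 𝒳 i) (hx : 0 < p x) (hx' : 0 < p x')
    (hpath : JointClassPath p c x x') :
    f x = f x' :=
  stmt9_general f p c hc x x' hpath
end

section
/- Suppose there are types M_i, encoders e_i : 𝒳 i → M_i, and a decoder r : (Π i, M_i) → 𝒵 such that r (fun i ↦ e_i (x i)) = f x for every admissible point x (a zero-error distributed functional code). Then each encoder e_i is a proper coloring of the characteristic graph G_i (adjacent vertices of G_i receive distinct values of e_i), and the colorings e_1, …, e_k satisfy the coloring connectivity condition; in particular, any two admissible points whose tuples of encoder outputs agree have the same f-value. -/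
/-- The colorings `c i` satisfy the coloring connectivity condition (C.C.C.): any two
admissible points in the same joint coloring class either have the same `f`-value or are
joined by a path within that joint coloring class. -/
def CCC {k : ℕ} {𝒳 : Fin k → Type*} {Z : Type*} {C : Fin k → Type*}
    (f : (∀ i, 𝒳 i) → Z) (p : (∀ i, 𝒳 i) → ℝ) (c : ∀ i, 𝒳 i → C i) : Prop :=
  ∀ x x' : ∀ i, 𝒳 i, 0 < p x → 0 < p x' → (∀ i, c i (x i) = c i (x' i)) →
    f x = f x' ∨ JointClassPath p c x x'

def DeterminedByColoring {k : ℕ} {𝒳 : Fin k → Type*} {Z : Type*} {C : Fin k → Type*}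
    (f : (∀ i, 𝒳 i) → Z) (p : (∀ i, 𝒳 i) → ℝ) (c : ∀ i, 𝒳 i → C i) : Prop :=
  ∀ x x' : ∀ i, 𝒳 i, 0 < p x → 0 < p x' → (∀ i, c i (x i) = c i (x' i)) → f x = f x'

namespace DeterminedByColoring

variable {k : ℕ} {𝒳 : Fin k → Type*} {Z : Type*} {C : Fin k → Type*}
  {f : (∀ i, 𝒳 i) → Z} {p : (∀ i, 𝒳 i) → ℝ} {c : ∀ i, 𝒳 i → C i}

theorem of_decoder {r : (∀ i, C i) → Z}
    (hcode : ∀ x : ∀ i, 𝒳 i, 0 < p x → r (fun i => c i (x i)) = f x) :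
    DeterminedByColoring f p c := by
  intro x x' hx hx' h
  rw [← hcode x hx, ← hcode x' hx', funext h]

theorem ne_of_adj (hdet : DeterminedByColoring f p c) {i : Fin k} {a b : 𝒳 i}
    (hadj : (charGraphI f p i).Adj a b) : c i a ≠ c i b := by
  obtain ⟨-, x, rfl, hx, hx', hf⟩ := hadj
  intro hab
  refine hf (hdet _ _ hx hx' fun j => ?_)
  rcases eq_or_ne j i with rfl | hj
  · rw [Function.update_self, hab]
  · rw [Function.update_of_ne hj]

theorem ccc (hdet : DeterminedByColoring f p c) : CCC f p c :=
  fun x x' hx hx' h => Or.inl (hdet x x' hx hx' h)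

end DeterminedByColoring

theorem stmt11_general {k : ℕ} {𝒳 : Fin k → Type*} {Z : Type*} {M : Fin k → Type*}
    (f : (∀ i, 𝒳 i) → Z) (p : (∀ i, 𝒳 i) → ℝ)
    (e : ∀ i, 𝒳 i → M i) (r : (∀ i, M i) → Z)
    (hcode : ∀ x : ∀ i, 𝒳 i, 0 < p x → r (fun i => e i (x i)) = f x) :
    (∀ i, ∀ a b, (charGraphI f p i).Adj a b → e i a ≠ e i b) ∧
    CCC f p e ∧
    (∀ x x' : ∀ i, 𝒳 i, 0 < p x → 0 < p x' → (∀ i, e i (x i) = e i (x' i)) →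
      f x = f x') := by
  have hdet : DeterminedByColoring f p e := .of_decoder hcode
  exact ⟨fun _ _ _ => hdet.ne_of_adj, hdet.ccc, hdet⟩

/-- A zero-error distributed functional code (encoders `e i` and a decoder `r` recovering `f`
at every admissible point) induces proper colorings of the characteristic graphs `G_i` which
satisfy the coloring connectivity condition; in particular, any two admissible points with
the same tuple of encoder outputs have the same `f`-value. -/
theorem stmt11 {k : ℕ} (hk : 0 < k) {𝒳 : Fin k → Type*} [∀ i, Fintype (𝒳 i)]
    [∀ i, Nonempty (𝒳 i)] {Z : Type*} {M : Fin k → Type*}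
    (f : (∀ i, 𝒳 i) → Z) (p : (∀ i, 𝒳 i) → ℝ) (hp : ∀ x, 0 ≤ p x)
    (e : ∀ i, 𝒳 i → M i) (r : (∀ i, M i) → Z)
    (hcode : ∀ x : ∀ i, 𝒳 i, 0 < p x → r (fun i => e i (x i)) = f x) :
    (∀ i, ∀ a b, (charGraphI f p i).Adj a b → e i a ≠ e i b) ∧
    CCC f p e ∧
    (∀ x x' : ∀ i, 𝒳 i, 0 < p x → 0 < p x' → (∀ i, e i (x i) = e i (x' i)) →
      f x = f x') :=
  stmt11_general f p e r hcode
end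

section
/- Suppose p x y > 0 for all x ∈ 𝒳₁ and y ∈ 𝒳₂ (full support) and let D ≥ 0. Let c₁ be a proper coloring of the (D/2)-characteristic graph G_{X₁}(D/2) and c₂ a proper coloring of the (D/2)-characteristic graph G_{X₂}(D/2). Then for all x₁, x₁' ∈ 𝒳₁ and x₂, x₂' ∈ 𝒳₂ with c₁ x₁ = c₁ x₁' and c₂ x₂ = c₂ x₂', one has d (f x₁ x₂) (f x₁' x₂') ≤ D; that is, from the two colors the receiver can reconstruct the value of f within distortion D. -/
/-- The `D'`-characteristic graph `G_{X₁}(D')` of `X₁` with respect to `X₂`, `p`, and `f`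
valued in a metric space: distinct `a, a'` are adjacent iff there exists `y` with
`p a y > 0`, `p a' y > 0`, and `dist (f a y) (f a' y) > D'`. -/
def dCharGraph1 {X1 X2 Z : Type*} [MetricSpace Z]
    (f : X1 → X2 → Z) (p : X1 → X2 → ℝ) (D' : ℝ) : SimpleGraph X1 where
  Adj a a' := a ≠ a' ∧ ∃ y, 0 < p a y ∧ 0 < p a' y ∧ D' < dist (f a y) (f a' y)
  symm := by
    constructor
    rintro a a' ⟨hne, y, h1, h2, h3⟩
    exact ⟨hne.symm, y, h2, h1, by rwa [dist_comm]⟩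
  loopless := by
    constructor
    rintro a ⟨h, -⟩
    exact h rfl

/-- The `D'`-characteristic graph `G_{X₂}(D')` of `X₂` with respect to `X₁`, `p`, and `f`. -/
def dCharGraph2 {X1 X2 Z : Type*} [MetricSpace Z]
    (f : X1 → X2 → Z) (p : X1 → X2 → ℝ) (D' : ℝ) : SimpleGraph X2 where
  Adj b b' := b ≠ b' ∧ ∃ x, 0 < p x b ∧ 0 < p x b' ∧ D' < dist (f x b) (f x b')
  symm := by
    constructor
    rintro b b' ⟨hne, x, h1, h2, h3⟩
    exact ⟨hne.symm, x, h2, h1, by rwa [dist_comm]⟩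
  loopless := by
    constructor
    rintro b ⟨h, -⟩
    exact h rfl

/-! Equal colors of `x₁, x₁'` move `f` by at most `D/2` along the row `x₂`, equal colors of
`x₂, x₂'` move it by at most `D/2` along the column `x₁'`, and the triangle inequality through
`f x₁' x₂` adds the two halves. Full support is what lets every pair of points witness an edge. -/

section ColorClasses

variable {X1 X2 Z C : Type*} [MetricSpace Z] {f : X1 → X2 → Z} {p : X1 → X2 → ℝ} {D' : ℝ}

theorem dist_le_of_color_eq_of_dCharGraph1 (hD' : 0 ≤ D') {c : X1 → C}
    (hc : ∀ a a', (dCharGraph1 f p D').Adj a a' → c a ≠ c a') {a a' : X1} {y : X2}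
    (ha : 0 < p a y) (ha' : 0 < p a' y) (h : c a = c a') :
    dist (f a y) (f a' y) ≤ D' := by
  by_contra! hlt
  have hne : a ≠ a' := by
    rintro rfl
    rw [dist_self] at hlt
    exact hlt.not_ge hD'
  exact hc a a' ⟨hne, y, ha, ha', hlt⟩ h

-- `dCharGraph2 f p` is definitionally `dCharGraph1` of the transposed `f` and `p`.
theorem dist_le_of_color_eq_of_dCharGraph2 (hD' : 0 ≤ D') {c : X2 → C}
    (hc : ∀ b b', (dCharGraph2 f p D').Adj b b' → c b ≠ c b') {b b' : X2} {x : X1}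
    (hb : 0 < p x b) (hb' : 0 < p x b') (h : c b = c b') :
    dist (f x b) (f x b') ≤ D' :=
  dist_le_of_color_eq_of_dCharGraph1 (f := fun b x ↦ f x b) (p := fun b x ↦ p x b) hD' hc hb hb' h

end ColorClasses

theorem stmt16_general {X1 X2 Z C₁ C₂ : Type*}
    [MetricSpace Z]
    (f : X1 → X2 → Z) (p : X1 → X2 → ℝ) (hp : ∀ x y, 0 < p x y)
    (D : ℝ) (hD : 0 ≤ D)
    (c₁ : X1 → C₁) (hc₁ : ∀ a a', (dCharGraph1 f p (D / 2)).Adj a a' → c₁ a ≠ c₁ a')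
    (c₂ : X2 → C₂) (hc₂ : ∀ b b', (dCharGraph2 f p (D / 2)).Adj b b' → c₂ b ≠ c₂ b') :
    ∀ (x₁ x₁' : X1) (x₂ x₂' : X2), c₁ x₁ = c₁ x₁' → c₂ x₂ = c₂ x₂' →
      dist (f x₁ x₂) (f x₁' x₂') ≤ D := by
  intro x₁ x₁' x₂ x₂' h₁ h₂
  have hD₂ : 0 ≤ D / 2 := by positivity
  calc dist (f x₁ x₂) (f x₁' x₂')
      ≤ dist (f x₁ x₂) (f x₁' x₂) + dist (f x₁' x₂) (f x₁' x₂') := dist_triangle _ _ _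
    _ ≤ D / 2 + D / 2 :=
        add_le_add (dist_le_of_color_eq_of_dCharGraph1 hD₂ hc₁ (hp _ _) (hp _ _) h₁)
          (dist_le_of_color_eq_of_dCharGraph2 hD₂ hc₂ (hp _ _) (hp _ _) h₂)
    _ = D := add_halves D

/-- Under full support, given proper colorings of the `(D/2)`-characteristic graphs of `X₁`
and `X₂`, any two pairs with matching colors have `f`-values within distance `D`; hence from
the two colors the receiver can compute `f` within distortion `D`. -/
theorem stmt16 {X1 X2 Z C₁ C₂ : Type*} [Fintype X1] [Nonempty X1] [Fintype X2] [Nonempty X2]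
    [MetricSpace Z]
    (f : X1 → X2 → Z) (p : X1 → X2 → ℝ) (hp : ∀ x y, 0 < p x y)
    (D : ℝ) (hD : 0 ≤ D)
    (c₁ : X1 → C₁) (hc₁ : ∀ a a', (dCharGraph1 f p (D / 2)).Adj a a' → c₁ a ≠ c₁ a')
    (c₂ : X2 → C₂) (hc₂ : ∀ b b', (dCharGraph2 f p (D / 2)).Adj b b' → c₂ b ≠ c₂ b') :
    ∀ (x₁ x₁' : X1) (x₂ x₂' : X2), c₁ x₁ = c₁ x₁' → c₂ x₂ = c₂ x₂' →
      dist (f x₁ x₂) (f x₁' x₂') ≤ D :=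
  stmt16_general f p hp D hD c₁ hc₁ c₂ hc₂
end
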